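/- arXiv:2208.13006 — 5 statements merged into one kernel-verified Lean document; each statement's English description precedes it below -/
import Mathlib

section
/- Let A ∈ ℝ^{n_s×n_s}, B_w ∈ ℝ^{n_s×n_q}, C ∈ ℝ^{n_o×n_s}, and define 𝐀 = [[A, B_w], [0, 0]] and 𝐂 = [C, 0], and for every real ε > 0 define 𝐀_ε = [[εA, B_w], [0, 0]], all acting on ℝ^{n_s+n_q}. If (𝐂, 𝐀) is observable, then (𝐂, 𝐀_ε) is observable for every ε > 0. -/
open Matrix

/-- `(C, A)` is an observable pair: the only vector with `C A^k x = 0` for all `k` is `x = 0`. -/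
def Observable {n p : Type*} [Fintype n] [DecidableEq n]
    (C : Matrix p n ℝ) (A : Matrix n n ℝ) : Prop :=
  ∀ x : n → ℝ, (∀ k : ℕ, (C * A ^ k).mulVec x = 0) → x = 0

/-!
With `D = diag(ε I, I)` one has `𝐀_ε = 𝐀 D`, `𝐂 D = ε 𝐂` and `D 𝐀 D = ε 𝐀 D`. Pushing the
factors `D` to the right gives `ε 𝐂 (𝐀 D)^k = ε^k 𝐂 𝐀^k D`, so if `𝐂 𝐀_ε^k x = 0` for all `k`
then `D x` is unobservable for `(𝐂, 𝐀)`, hence `D x = 0`, hence `x = 0` as `D` is invertible.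
-/

namespace Matrix

variable {R : Type*} [CommSemiring R] {n p : Type*} [Fintype n] [DecidableEq n]

theorem smul_mul_pow_mul_right_eq {C : Matrix p n R} {A D : Matrix n n R} {ε : R}
    (hC : C * D = ε • C) (hAD : D * A * D = ε • (A * D)) (k : ℕ) :
    ε • (C * (A * D) ^ k) = ε ^ k • (C * A ^ k * D) := by
  induction k with
  | zero => simp [hC]
  | succ k ih =>
    calc ε • (C * (A * D) ^ (k + 1))
        = ε • (C * (A * D) ^ k) * (A * D) := by rw [pow_succ, smul_mul, Matrix.mul_assoc]
      _ = ε ^ k • (C * A ^ k * (D * A * D)) := by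
          rw [ih, smul_mul]; simp only [Matrix.mul_assoc]
      _ = ε ^ (k + 1) • (C * A ^ (k + 1) * D) := by
          rw [hAD, Matrix.mul_smul, smul_smul]; simp only [pow_succ, Matrix.mul_assoc]

end Matrix

theorem Observable.mul_right {n p : Type*} [Fintype n] [DecidableEq n]
    {C : Matrix p n ℝ} {A D : Matrix n n ℝ} {ε : ℝ} (hA : Observable C A) (hD : IsUnit D)
    (hε : ε ≠ 0) (hC : C * D = ε • C) (hAD : D * A * D = ε • (A * D)) :
    Observable C (A * D) := by
  intro x hx
  have hDx : ∀ k : ℕ, (C * A ^ k).mulVec (D.mulVec x) = 0 := fun k => by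
    have h := congrArg (fun M : Matrix p n ℝ => M.mulVec x) (smul_mul_pow_mul_right_eq hC hAD k)
    simpa [smul_mulVec, mulVec_mulVec, hx k, hε] using h.symm
  exact mulVec_injective_of_isUnit hD (by rw [hA _ hDx, mulVec_zero])

def scaleFirstBlock (m n : Type*) [DecidableEq m] [DecidableEq n] (ε : ℝ) :
    Matrix (m ⊕ n) (m ⊕ n) ℝ :=
  fromBlocks (ε • 1) 0 0 1

section BlockScaling

variable {m n o p : Type*} [Fintype m] [Fintype n] [DecidableEq m] [DecidableEq n]

theorem isUnit_scaleFirstBlock {ε : ℝ} (hε : ε ≠ 0) :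
    IsUnit (scaleFirstBlock m n ε) := by
  simp [scaleFirstBlock, isUnit_iff_isUnit_det, hε]

theorem fromBlocks_mul_scaleFirstBlock (ε : ℝ) (A : Matrix m m ℝ) (B : Matrix m n ℝ) :
    fromBlocks A B (0 : Matrix o m ℝ) 0 * scaleFirstBlock m n ε = fromBlocks (ε • A) B 0 0 := by
  simp [scaleFirstBlock, fromBlocks_multiply]

theorem scaleFirstBlock_mul_fromBlocks (ε : ℝ) (A : Matrix m m ℝ) (B : Matrix m n ℝ) :
    scaleFirstBlock m n ε * fromBlocks A B (0 : Matrix n m ℝ) 0 = ε • fromBlocks A B 0 0 := by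
  simp [scaleFirstBlock, fromBlocks_multiply, fromBlocks_smul]

theorem fromCols_mul_scaleFirstBlock (ε : ℝ) (C : Matrix p m ℝ) :
    fromCols C (0 : Matrix p n ℝ) * scaleFirstBlock m n ε = ε • fromCols C 0 := by
  rw [scaleFirstBlock, fromCols_mul_fromBlocks]
  ext i (j | j) <;> simp

end BlockScaling

/-- Lemma 3: if the extended pair `(𝐂, 𝐀)` is observable, then so is `(𝐂, 𝐀_ε)` for every
`ε > 0`, where `𝐀_ε = [[εA, B_w], [0, 0]]`. -/
theorem extended_observable_eps {ns nq no : ℕ}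
    (A : Matrix (Fin ns) (Fin ns) ℝ) (Bw : Matrix (Fin ns) (Fin nq) ℝ)
    (C : Matrix (Fin no) (Fin ns) ℝ)
    (h : Observable (Matrix.fromCols C 0) (Matrix.fromBlocks A Bw 0 0)) :
    ∀ ε : ℝ, 0 < ε →
      Observable (Matrix.fromCols C 0) (Matrix.fromBlocks (ε • A) Bw 0 0) := by
  intro ε hε
  rw [← fromBlocks_mul_scaleFirstBlock]
  refine h.mul_right (isUnit_scaleFirstBlock hε.ne') hε.ne' (fromCols_mul_scaleFirstBlock ε C) ?_
  rw [Matrix.mul_assoc, fromBlocks_mul_scaleFirstBlock, scaleFirstBlock_mul_fromBlocks]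
end

section
/- Let A ∈ ℝ^{n_s×n_s}, C ∈ ℝ^{n_o×n_s}, and let π be a residual feed-forward neural network with input dimension n_o, output dimension n_s, weights W^1, …, W^{L+2}, and activation σ with σ(0) = 0 that is sector bounded in [α_i, β_i] at every neuron. Let λ ∈ ℝ^{n_σ} with λ ≥ 0, and form R_π, R_ξ with input pre-matrix T = C, together with Ψ and M(λ). If there exists a symmetric positive definite P ∈ ℝ^{n_s×n_s} such that R_πᵀ [[AᵀP + PA, P], [P, 0]] R_π + R_ξᵀ Ψᵀ M(λ) Ψ R_ξ is negative definite, then there exists ε > 0 such that for every e ∈ ℝ^{n_s}: 2 eᵀ P (A e + π(C e)) ≤ −ε (‖e‖₂² + ‖π(C e)‖₂²). -/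
open Matrix

/-- A residual feed-forward neural network with `Lm + 1` hidden layers,
input dimension `n₀`, output dimension `m`.  `hw l` is the width of hidden layer `l+1`
(0-based: hidden layers are indexed `0, …, Lm`).  `W l` is the weight matrix feeding
hidden layer `l`, `Wout` the output weight matrix `W^{L+1}` and `Wskip` the shortcut
connection weight matrix `W^{L+2}`. -/
structure ResNet (n₀ m : ℕ) where
  Lm : ℕ
  hw : ℕ → ℕ
  W : (l : ℕ) → Matrix (Fin (hw l)) (Fin (if l = 0 then n₀ else hw (l - 1))) ℝ
  Wout : Matrix (Fin m) (Fin (hw Lm)) ℝ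
  Wskip : Matrix (Fin m) (Fin n₀) ℝ

namespace ResNet

variable {n₀ m : ℕ}

/-- dimension of layer `l` (`l = 0` is the input layer, `l = 1, …, Lm+1` the hidden layers). -/
def dim (net : ResNet n₀ m) (l : ℕ) : ℕ := if l = 0 then n₀ else net.hw (l - 1)

/-- the forward pass through the hidden layers: `hfun σ net l x` is `h^l(x)`. -/
def hfun (σ : ℝ → ℝ) (net : ResNet n₀ m) : (l : ℕ) → (Fin n₀ → ℝ) → (Fin (net.dim l) → ℝ)
  | 0, x => x
  | l + 1, x => fun i => σ ((net.W l).mulVec (hfun σ net l x) i)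

/-- the output `π(x) = W^{L+1} h^L(x) + W^{L+2} x` of the residual network. -/
def apply (σ : ℝ → ℝ) (net : ResNet n₀ m) (x : Fin n₀ → ℝ) : Fin m → ℝ :=
  net.Wout.mulVec (hfun σ net (net.Lm + 1) x) + net.Wskip.mulVec x

/-- index type for the neurons (all hidden layers stacked). -/
abbrev NIdx (net : ResNet n₀ m) : Type := Σ l : Fin (net.Lm + 1), Fin (net.hw l)

/-- the first-layer weight matrix `W^1`. -/
def W1 (net : ResNet n₀ m) : Matrix (Fin (net.hw 0)) (Fin n₀) ℝ := net.W 0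

/-- the isolation block `N_{πw} = [0 ⋯ 0 W^{L+1}]`. -/
def Npiw (net : ResNet n₀ m) : Matrix (Fin m) net.NIdx ℝ :=
  Matrix.of fun i j =>
    if h : (j.1 : ℕ) = net.Lm then net.Wout i (Fin.cast (congrArg net.hw h) j.2) else 0

/-- the isolation block `N_{ξx} = [(W^1 T)ᵀ 0 ⋯ 0]ᵀ` for an input pre-matrix `T`. -/
def Nxix (net : ResNet n₀ m) {P : Type*} (T : Matrix (Fin n₀) P ℝ) :
    Matrix net.NIdx P ℝ :=
  Matrix.of fun j i =>
    if h : (j.1 : ℕ) = 0 then (net.W1 * T) (Fin.cast (congrArg net.hw h) j.2) i else 0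

/-- the isolation block `N_{ξw}` (block `(l, l-1)` is `W^l`). -/
def Nxiw (net : ResNet n₀ m) : Matrix net.NIdx net.NIdx ℝ :=
  Matrix.of fun i j =>
    if h : (j.1 : ℕ) + 1 = (i.1 : ℕ) then
      net.W i.1 i.2 (Fin.cast (by
        rw [if_neg (by omega : ¬ ((i.1 : ℕ)) = 0)]
        exact congrArg net.hw (by omega)) j.2)
    else 0

/-- the isolation matrix `R_π = [[I, 0], [N_{πx}, N_{πw}]]` with input pre-matrix `T`. -/
def Rpi (net : ResNet n₀ m) {P : Type*} [DecidableEq P]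
    (T : Matrix (Fin n₀) P ℝ) : Matrix (P ⊕ Fin m) (P ⊕ net.NIdx) ℝ :=
  Matrix.fromBlocks 1 0 (net.Wskip * T) net.Npiw

/-- the isolation matrix `R_ξ = [[N_{ξx}, N_{ξw}], [0, I]]` with input pre-matrix `T`. -/
def Rxi (net : ResNet n₀ m) {P : Type*}
    (T : Matrix (Fin n₀) P ℝ) : Matrix (net.NIdx ⊕ net.NIdx) (P ⊕ net.NIdx) ℝ :=
  Matrix.fromBlocks (net.Nxix T) net.Nxiw 0 1

end ResNet

/-- `Ψ = [[diag β, -I], [-diag α, I]]`. -/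
def Psi {I : Type*} [DecidableEq I] (a b : I → ℝ) : Matrix (I ⊕ I) (I ⊕ I) ℝ :=
  Matrix.fromBlocks (Matrix.diagonal b) (-1) (-(Matrix.diagonal a)) 1

/-- `M(λ) = [[0, diag λ], [diag λ, 0]]`. -/
def Mmat {I : Type*} [DecidableEq I] (lam : I → ℝ) : Matrix (I ⊕ I) (I ⊕ I) ℝ :=
  Matrix.fromBlocks 0 (Matrix.diagonal lam) (Matrix.diagonal lam) 0

/-- a matrix is negative definite if its quadratic form is negative on nonzero vectors. -/
def Matrix.NegDef {I : Type*} [Fintype I] (S : Matrix I I ℝ) : Prop :=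
  ∀ x : I → ℝ, x ≠ 0 → x ⬝ᵥ S.mulVec x < 0

/-- the Euclidean norm `‖v‖₂` of a finitely indexed real vector. -/
noncomputable def norm2 {I : Type*} [Fintype I] (v : I → ℝ) : ℝ := Real.sqrt (∑ i, v i ^ 2)

/-- `σ` is sector bounded in `[a, b]`. -/
def SectorBounded (σ : ℝ → ℝ) (a b : ℝ) : Prop := ∀ s : ℝ, 0 ≤ (σ s - a * s) * (b * s - σ s)

/-- a real square matrix is Hurwitz if all its complex eigenvalues have negative real part. -/
def IsHurwitz {n : ℕ} (A : Matrix (Fin n) (Fin n) ℝ) : Prop :=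
  ∀ μ ∈ spectrum ℂ (A.map (Complex.ofReal)), μ.re < 0

/-- induced `∞`-norm of a matrix: maximum absolute row sum. -/
noncomputable def rowSumNorm {I J : Type*} [Fintype J] (A : Matrix I J ℝ) : ℝ :=
  ⨆ i, ∑ j, |A i j|

/-!
Evaluate both quadratic forms of the LMI at `z = [e; w_σ(C e)]`. Since `R_π z = [e; π(C e)]`,
the first one is `2 eᵀ P (A e + π(C e))`; since `R_ξ z = [ξ_σ(C e); w_σ(C e)]`, the second one is
`2 ∑ λᵢ (βᵢ ξᵢ - wᵢ)(wᵢ - αᵢ ξᵢ) ≥ 0` by the sector bounds. Negative definiteness bounds the sum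
by `-ε ‖z‖²` (compactness of the unit sphere), and `‖R_π z‖ ≤ ‖R_π‖_F ‖z‖` turns this into a
bound in terms of `‖e‖² + ‖π(C e)‖²`.
-/

theorem exists_pos_le_neg_mul_norm_sq {E : Type*} [NormedAddCommGroup E] [NormedSpace ℝ E]
    [FiniteDimensional ℝ E] {f : E → ℝ} (hf : Continuous f)
    (hhom : ∀ (c : ℝ) (x : E), f (c • x) = c ^ 2 * f x) (hneg : ∀ x ≠ 0, f x < 0) :
    ∃ ε > 0, ∀ x, f x ≤ -ε * ‖x‖ ^ 2 := by
  have hf0 : f 0 = 0 := by simpa using hhom 0 0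
  rcases subsingleton_or_nontrivial E with hE | hE
  · exact ⟨1, one_pos, fun x => by simp [Subsingleton.elim x 0, hf0]⟩
  obtain ⟨u, hu, hmax⟩ := (isCompact_sphere (0 : E) 1).exists_isMaxOn
    (NormedSpace.sphere_nonempty.mpr zero_le_one) hf.continuousOn
  have hu0 : u ≠ 0 := ne_zero_of_mem_unit_sphere ⟨u, hu⟩
  refine ⟨-f u, neg_pos.mpr (hneg u hu0), fun x => ?_⟩
  rcases eq_or_ne x 0 with rfl | hx
  · simp [hf0]
  have hx' : ‖x‖ ≠ 0 := norm_ne_zero_iff.mpr hx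
  have hscale : f x = ‖x‖ ^ 2 * f (‖x‖⁻¹ • x) := by
    rw [← hhom, smul_smul, mul_inv_cancel₀ hx', one_smul]
  have hle : f (‖x‖⁻¹ • x) ≤ f u :=
    hmax (by simp [norm_smul, inv_mul_cancel₀ hx'])
  rw [hscale, neg_neg, mul_comm (f u)]
  exact mul_le_mul_of_nonneg_left hle (sq_nonneg _)

theorem Matrix.NegDef.exists_pos_dotProduct_mulVec_le {I : Type*} [Fintype I]
    {S : Matrix I I ℝ} (hS : S.NegDef) :
    ∃ ε > 0, ∀ z : I → ℝ, z ⬝ᵥ S *ᵥ z ≤ -ε * ∑ i, z i ^ 2 := by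
  obtain ⟨ε, hε, hle⟩ := exists_pos_le_neg_mul_norm_sq (E := EuclideanSpace ℝ I)
    (f := fun z => z.ofLp ⬝ᵥ S *ᵥ z.ofLp) (by fun_prop)
    (fun c x => by
      simp only [WithLp.ofLp_smul, mulVec_smul, dotProduct_smul, smul_dotProduct, smul_eq_mul]
      ring)
    (fun x hx => hS _ (by simpa using hx))
  refine ⟨ε, hε, fun z => ?_⟩
  simpa [EuclideanSpace.real_norm_sq_eq] using hle (WithLp.toLp 2 z)

theorem Matrix.dotProduct_transpose_mul_mul_mulVec {α I J : Type*} [CommSemiring α] [Fintype I]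
    [Fintype J] (R : Matrix I J α) (X : Matrix I I α) (z : J → α) :
    z ⬝ᵥ (Rᵀ * X * R) *ᵥ z = (R *ᵥ z) ⬝ᵥ X *ᵥ (R *ᵥ z) := by
  rw [← mulVec_mulVec, ← mulVec_mulVec, dotProduct_transpose_mulVec, dotProduct_comm]

theorem Matrix.sum_mulVec_sq_le {I J : Type*} [Fintype I] [Fintype J] (R : Matrix I J ℝ)
    (z : J → ℝ) : ∑ i, (R *ᵥ z) i ^ 2 ≤ (∑ i, ∑ j, R i j ^ 2) * ∑ j, z j ^ 2 := by
  rw [Finset.sum_mul]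
  exact Finset.sum_le_sum fun i _ => Finset.sum_mul_sq_le_sq_mul_sq _ (R i) z

theorem Matrix.NegDef.exists_pos_dotProduct_mulVec_le_of_nonneg {I J : Type*} [Fintype I]
    [Fintype J] {R : Matrix I J ℝ} {X : Matrix I I ℝ} {Y : Matrix J J ℝ}
    (h : (Rᵀ * X * R + Y).NegDef) :
    ∃ ε > 0, ∀ z, 0 ≤ z ⬝ᵥ Y *ᵥ z →
      (R *ᵥ z) ⬝ᵥ X *ᵥ (R *ᵥ z) ≤ -ε * ∑ i, (R *ᵥ z) i ^ 2 := by
  obtain ⟨ε, hε, hle⟩ := h.exists_pos_dotProduct_mulVec_le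
  set K := ∑ i, ∑ j, R i j ^ 2 + 1
  have hK : 0 < K := by positivity
  refine ⟨ε / K, div_pos hε hK, fun z hY => ?_⟩
  have hRz : ∑ i, (R *ᵥ z) i ^ 2 ≤ K * ∑ j, z j ^ 2 :=
    (R.sum_mulVec_sq_le z).trans
      (mul_le_mul_of_nonneg_right (le_add_of_nonneg_right zero_le_one) (by positivity))
  have hz := hle z
  rw [add_mulVec, dotProduct_add, dotProduct_transpose_mul_mul_mulVec] at hz
  calc (R *ᵥ z) ⬝ᵥ X *ᵥ (R *ᵥ z) ≤ -ε * ∑ j, z j ^ 2 := by linarith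
    _ ≤ -(ε / K) * ∑ i, (R *ᵥ z) i ^ 2 := by
      rw [neg_mul, neg_mul, neg_le_neg_iff, div_mul_eq_mul_div, div_le_iff₀ hK]
      linear_combination ε * hRz

theorem sumElim_dotProduct_lyapunov_block_mulVec {α n : Type*} [CommRing α] [Fintype n]
    (A : Matrix n n α) {P : Matrix n n α} (hP : P.IsSymm) (e u : n → α) :
    Sum.elim e u ⬝ᵥ fromBlocks (Aᵀ * P + P * A) P P 0 *ᵥ Sum.elim e u
      = 2 * (e ⬝ᵥ P *ᵥ (A *ᵥ e + u)) := by
  have hswap : u ⬝ᵥ P *ᵥ e = e ⬝ᵥ P *ᵥ u := by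
    simpa only [hP.eq] using dotProduct_transpose_mulVec P u e
  have hAP : Aᵀ * P = (P * A)ᵀ := by rw [transpose_mul, hP.eq]
  rw [fromBlocks_mulVec, sumElim_dotProduct_sumElim, Sum.elim_comp_inl, Sum.elim_comp_inr,
    zero_mulVec, add_zero, add_mulVec, dotProduct_add, dotProduct_add, hAP,
    dotProduct_transpose_mulVec, hswap, ← mulVec_mulVec, mulVec_add, dotProduct_add]
  ring

theorem norm2_sq {I : Type*} [Fintype I] (v : I → ℝ) : norm2 v ^ 2 = ∑ i, v i ^ 2 :=
  Real.sq_sqrt (by positivity)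

theorem Psi_mulVec {I : Type*} [Fintype I] [DecidableEq I] (a b ξ w : I → ℝ) :
    Psi a b *ᵥ Sum.elim ξ w = Sum.elim (b * ξ - w) (w - a * ξ) := by
  ext (i | i) <;>
    simp [Psi, fromBlocks_mulVec, mulVec_diagonal, neg_mulVec, sub_eq_add_neg, add_comm]

theorem sumElim_dotProduct_Mmat_mulVec {I : Type*} [Fintype I] [DecidableEq I]
    (lam u v : I → ℝ) :
    Sum.elim u v ⬝ᵥ Mmat lam *ᵥ Sum.elim u v = 2 * ∑ i, lam i * (u i * v i) := by
  rw [Mmat, fromBlocks_mulVec, Sum.elim_comp_inl, Sum.elim_comp_inr, zero_mulVec, zero_mulVec,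
    zero_add, add_zero, sumElim_dotProduct_sumElim]
  simp only [dotProduct, mulVec_diagonal, Finset.mul_sum, ← Finset.sum_add_distrib]
  exact Finset.sum_congr rfl fun i _ => by ring

theorem sector_quadratic_form_nonneg {I : Type*} [Fintype I] [DecidableEq I] {σ : ℝ → ℝ}
    {a b lam : I → ℝ} (hsec : ∀ i, SectorBounded σ (a i) (b i)) (hlam : ∀ i, 0 ≤ lam i)
    (ξ : I → ℝ) :
    0 ≤ (Psi a b *ᵥ Sum.elim ξ (σ ∘ ξ)) ⬝ᵥ Mmat lam *ᵥ (Psi a b *ᵥ Sum.elim ξ (σ ∘ ξ)) := by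
  rw [Psi_mulVec, sumElim_dotProduct_Mmat_mulVec]
  refine mul_nonneg zero_le_two (Finset.sum_nonneg fun i _ => mul_nonneg (hlam i) ?_)
  simpa [mul_comm] using hsec i (ξ i)

namespace ResNet

variable {n₀ m : ℕ} (σ : ℝ → ℝ) (net : ResNet n₀ m)

/-- The stacked pre-activations `ξ_σ(x)`; the stacked activations `w_σ(x)` are
`σ ∘ net.preactivation σ x`. -/
def preactivation (x : Fin n₀ → ℝ) (j : net.NIdx) : ℝ :=
  (net.W j.1 *ᵥ net.hfun σ j.1 x) j.2

theorem Npiw_mulVec (v : net.NIdx → ℝ) :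
    net.Npiw *ᵥ v = net.Wout *ᵥ fun k => v ⟨Fin.last _, k⟩ := by
  ext i
  simp only [mulVec, dotProduct, Npiw, of_apply, Fintype.sum_sigma]
  rw [Fintype.sum_eq_single (Fin.last _) fun l hl => Finset.sum_eq_zero fun k _ => by
    rw [dif_neg (show (l : ℕ) ≠ net.Lm from fun h => hl (Fin.ext h)), zero_mul]]
  simp

theorem Nxix_mulVec_apply_zero {Q : Type*} [Fintype Q] (T : Matrix (Fin n₀) Q ℝ) (e : Q → ℝ)
    (h : 0 < net.Lm + 1) (k : Fin (net.hw 0)) :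
    (net.Nxix T *ᵥ e) ⟨⟨0, h⟩, k⟩ = ((net.W1 * T) *ᵥ e) k := by
  simp [mulVec, dotProduct, Nxix]

theorem Nxix_mulVec_apply_succ {Q : Type*} [Fintype Q] (T : Matrix (Fin n₀) Q ℝ) (e : Q → ℝ)
    {t : ℕ} (h : t + 1 < net.Lm + 1) (k : Fin (net.hw (t + 1))) :
    (net.Nxix T *ᵥ e) ⟨⟨t + 1, h⟩, k⟩ = 0 := by
  simp [mulVec, dotProduct, Nxix]

theorem Nxiw_mulVec_apply_zero (v : net.NIdx → ℝ) (h : 0 < net.Lm + 1) (k : Fin (net.hw 0)) :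
    (net.Nxiw *ᵥ v) ⟨⟨0, h⟩, k⟩ = 0 := by
  simp [mulVec, dotProduct, Nxiw]

theorem Nxiw_mulVec_preactivation_apply_succ (x : Fin n₀ → ℝ)
    {t : ℕ} (h : t + 1 < net.Lm + 1) (k : Fin (net.hw (t + 1))) :
    (net.Nxiw *ᵥ (σ ∘ net.preactivation σ x)) ⟨⟨t + 1, h⟩, k⟩
      = (net.W (t + 1) *ᵥ net.hfun σ (t + 1) x) k := by
  simp only [mulVec, dotProduct, Nxiw, of_apply, Fintype.sum_sigma]
  rw [Fintype.sum_eq_single ⟨t, by omega⟩ fun l hl => Finset.sum_eq_zero fun k' _ => by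
    rw [dif_neg (show (l : ℕ) + 1 ≠ t + 1 from fun h' => hl (Fin.ext (Nat.succ_injective h'))),
      zero_mul]]
  exact Finset.sum_congr rfl fun k' _ => by rw [dif_pos rfl]; rfl

theorem Nxix_mulVec_add_Nxiw_mulVec {Q : Type*} [Fintype Q] (T : Matrix (Fin n₀) Q ℝ)
    (e : Q → ℝ) :
    net.Nxix T *ᵥ e + net.Nxiw *ᵥ (σ ∘ net.preactivation σ (T *ᵥ e))
      = net.preactivation σ (T *ᵥ e) := by
  ext ⟨⟨_ | t, h⟩, k⟩
  · rw [Pi.add_apply, Nxix_mulVec_apply_zero, Nxiw_mulVec_apply_zero, add_zero, W1,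
      ← mulVec_mulVec]
    rfl
  · rw [Pi.add_apply, Nxix_mulVec_apply_succ, Nxiw_mulVec_preactivation_apply_succ, zero_add]
    rfl

theorem Rpi_mulVec {Q : Type*} [Fintype Q] [DecidableEq Q] (T : Matrix (Fin n₀) Q ℝ)
    (e : Q → ℝ) :
    net.Rpi T *ᵥ Sum.elim e (σ ∘ net.preactivation σ (T *ᵥ e))
      = Sum.elim e (net.apply σ (T *ᵥ e)) := by
  rw [Rpi, fromBlocks_mulVec, Sum.elim_comp_inl, Sum.elim_comp_inr, one_mulVec, zero_mulVec,
    add_zero, Npiw_mulVec, ← mulVec_mulVec, apply, add_comm]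
  rfl

theorem Rxi_mulVec {Q : Type*} [Fintype Q] (T : Matrix (Fin n₀) Q ℝ) (e : Q → ℝ) :
    net.Rxi T *ᵥ Sum.elim e (σ ∘ net.preactivation σ (T *ᵥ e))
      = Sum.elim (net.preactivation σ (T *ᵥ e)) (σ ∘ net.preactivation σ (T *ᵥ e)) := by
  rw [Rxi, fromBlocks_mulVec, Sum.elim_comp_inl, Sum.elim_comp_inr, zero_mulVec, one_mulVec,
    zero_add, Nxix_mulVec_add_Nxiw_mulVec]

end ResNet

theorem lyapunov_derivative_estimate_general
    {ns no : ℕ} (A : Matrix (Fin ns) (Fin ns) ℝ)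
    (C : Matrix (Fin no) (Fin ns) ℝ)
    {σ : ℝ → ℝ}
    (net : ResNet no ns)
    (α β : net.NIdx → ℝ)
    (hsec : ∀ i : net.NIdx, SectorBounded σ (α i) (β i))
    (lam : net.NIdx → ℝ) (hlam : ∀ i, 0 ≤ lam i)
    (P : Matrix (Fin ns) (Fin ns) ℝ) (hP : P.PosDef)
    (hLMI : Matrix.NegDef
      ((net.Rpi C)ᵀ * Matrix.fromBlocks (Aᵀ * P + P * A) P P 0 * net.Rpi C
        + (net.Rxi C)ᵀ * (Psi α β)ᵀ * Mmat lam * Psi α β * net.Rxi C)) :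
    ∃ ε : ℝ, 0 < ε ∧ ∀ e : Fin ns → ℝ,
      2 * (e ⬝ᵥ P.mulVec (A.mulVec e + net.apply σ (C.mulVec e)))
        ≤ -ε * ((norm2 e) ^ 2 + (norm2 (net.apply σ (C.mulVec e))) ^ 2) := by
  rw [show (net.Rxi C)ᵀ * (Psi α β)ᵀ * Mmat lam * Psi α β * net.Rxi C
      = (Psi α β * net.Rxi C)ᵀ * Mmat lam * (Psi α β * net.Rxi C) by
    simp only [transpose_mul, Matrix.mul_assoc]] at hLMI
  obtain ⟨ε, hε, hle⟩ := hLMI.exists_pos_dotProduct_mulVec_le_of_nonneg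
  refine ⟨ε, hε, fun e => ?_⟩
  have hsector := sector_quadratic_form_nonneg hsec hlam (net.preactivation σ (C *ᵥ e))
  rw [← net.Rxi_mulVec σ C e, mulVec_mulVec, ← dotProduct_transpose_mul_mul_mulVec] at hsector
  have hbound := hle _ hsector
  rw [net.Rpi_mulVec, sumElim_dotProduct_lyapunov_block_mulVec A
    (isHermitian_iff_isSymm.mp hP.isHermitian), Fintype.sum_sum_type] at hbound
  simpa only [Sum.elim_inl, Sum.elim_inr, ← norm2_sq] using hbound

/-- The key quadratic-form estimate in the proof of Theorem 1: if the LMI has a symmetric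
positive definite solution `P`, then there exists `ε > 0` such that
`2 eᵀ P (A e + π(C e)) ≤ -ε (‖e‖₂² + ‖π(C e)‖₂²)` for every `e`. -/
theorem lyapunov_derivative_estimate
    {ns no : ℕ} (A : Matrix (Fin ns) (Fin ns) ℝ)
    (C : Matrix (Fin no) (Fin ns) ℝ)
    {σ : ℝ → ℝ} (hσ0 : σ 0 = 0)
    (net : ResNet no ns)
    (α β : net.NIdx → ℝ) (hαβ : ∀ i, α i ≤ β i)
    (hsec : ∀ i : net.NIdx, SectorBounded σ (α i) (β i))
    (lam : net.NIdx → ℝ) (hlam : ∀ i, 0 ≤ lam i)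
    (P : Matrix (Fin ns) (Fin ns) ℝ) (hP : P.PosDef)
    (hLMI : Matrix.NegDef
      ((net.Rpi C)ᵀ * Matrix.fromBlocks (Aᵀ * P + P * A) P P 0 * net.Rpi C
        + (net.Rxi C)ᵀ * (Psi α β)ᵀ * Mmat lam * Psi α β * net.Rxi C)) :
    ∃ ε : ℝ, 0 < ε ∧ ∀ e : Fin ns → ℝ,
      2 * (e ⬝ᵥ P.mulVec (A.mulVec e + net.apply σ (C.mulVec e)))
        ≤ -ε * ((norm2 e) ^ 2 + (norm2 (net.apply σ (C.mulVec e))) ^ 2) :=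
  lyapunov_derivative_estimate_general A C net α β hsec lam hlam P hP hLMI
end

section
/- Let A ∈ ℝ^{n_s×n_s}, C ∈ ℝ^{n_o×n_s}, and let π be a residual feed-forward neural network with input dimension n_o, output dimension n_s, weights W^1, …, W^{L+2}, and activation σ with σ(0) = 0 that is sector bounded in [0, β_i] at every neuron (lower sector bounds α = 0). Form the isolation blocks N_{πx} = W^{L+2}C, N_{πw}, N_{ξx} (built from W^1C), N_{ξw}, and the matrices R_π, R_ξ, Ψ (with α = 0), M(λ), all with input pre-matrix T = C. Suppose Ã = A + W^{L+2}C is Hurwitz, Q ∈ ℝ^{n_s×n_s} is diagonal with positive diagonal entries q_1, …, q_{n_s}, and P = ∫₀^∞ e^{Ãᵀ t} Q e^{Ã t} dt. Suppose there exists λ ∈ ℝ^{n_σ} with λ_i > 0 for all i such that, with R₁ = diag(λ ∘ β) (∘ the Hadamard product), M₁ = −P N_{πw} − N_{ξx}ᵀ R₁ and M₂ = R₁ N_{ξw} + N_{ξw}ᵀ R₁: (i) ‖M₁‖_∞ < min_i q_i, and (ii) ‖M₁ᵀ‖_∞ + ‖M₂‖_∞ < 2 min_i λ_i. Then P is symmetric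 positive definite and R_πᵀ [[AᵀP + PA, P], [P, 0]] R_π + R_ξᵀ Ψᵀ M(λ) Ψ R_ξ is negative definite. -/
open Matrix

/-!
The Gramian `P = ∫₀^∞ e^{Ãᵀt} Q e^{Ãt} dt` converges because `Ã` is Hurwitz: on a generalised
eigenspace of eigenvalue `μ`, `e^{Ãt}` is `e^{μt}` times a polynomial in `t`. It is positive
definite because its integrand is, and integrating the derivative `ÃᵀF + FÃ` of the integrand `F`
gives the Lyapunov equation `ÃᵀP + PÃ = -Q`. With `α = 0` the LMI matrix then has the block form
`[[-Q, -M₁], [-M₁ᵀ, M₂ - 2 diag λ]]`, and (i), (ii) imply that in every row the absolute values of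
the entries of `X = [[0, -M₁], [-M₁ᵀ, M₂]]` sum to less than the corresponding entry `dᵢ` of
`(q, 2λ)`. For symmetric `X`, AM–GM on `xᵢ Xᵢⱼ xⱼ` then gives `xᵀ X x < ∑ dᵢ xᵢ²` for `x ≠ 0`.
-/

open NormedSpace Filter Asymptotics Topology MeasureTheory Set
open scoped Nat

section ExpDecay

variable {ι : Type*} [Fintype ι] [DecidableEq ι]

open scoped Matrix.Norms.Operator in
theorem Matrix.exp_mulVec_eq_sum_of_pow_mulVec_eq_zero {𝕂 : Type*} [RCLike 𝕂]
    {M : Matrix ι ι 𝕂} {v : ι → 𝕂} {K : ℕ} (hK : M ^ K *ᵥ v = 0) :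
    exp M *ᵥ v = ∑ k ∈ Finset.range K, (k ! : 𝕂)⁻¹ • (M ^ k *ᵥ v) := by
  have hsum : HasSum (fun k => (k ! : 𝕂)⁻¹ • (M ^ k *ᵥ v)) (exp M *ᵥ v) := by
    have := (exp_series_hasSum_exp' (𝕂 := 𝕂) M).map
      (mulVec.addMonoidHomLeft v) (continuous_id.matrix_mulVec continuous_const)
    simp only [Function.comp_def, mulVec.addMonoidHomLeft, AddMonoidHom.coe_mk, ZeroHom.coe_mk,
      smul_mulVec] at this
    exact this
  refine hsum.unique (hasSum_sum_of_ne_finset_zero fun k hk => ?_)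
  rw [← Nat.sub_add_cancel (not_lt.mp (Finset.mem_range.not.mp hk)), pow_add, ← mulVec_mulVec,
    hK, mulVec_zero, smul_zero]

open scoped Matrix.Norms.Operator in
theorem Matrix.exp_smul_one (c : ℂ) : exp (c • (1 : Matrix ι ι ℂ)) = Complex.exp c • 1 := by
  have := (algebraMap_exp_comm (𝔸 := Matrix ι ι ℂ) c).symm
  rw [Algebra.algebraMap_eq_smul_one, Algebra.algebraMap_eq_smul_one,
    ← Complex.exp_eq_exp_ℂ] at this
  exact this

theorem isBigO_cexp_mul_pow {μ : ℂ} {ε : ℝ} (hμ : μ.re < -ε) (k : ℕ) :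
    (fun t : ℝ => Complex.exp (t * μ) * (t : ℂ) ^ k) =O[atTop] fun t => Real.exp (-ε * t) := by
  have hexp : (fun t : ℝ => Complex.exp (t * μ)) =O[atTop] fun t => Real.exp (μ.re * t) :=
    isBigO_of_le _ fun t => by simp [Complex.norm_exp, mul_comm]
  have hpow : (fun t : ℝ => (t : ℂ) ^ k) =O[atTop] fun t => Real.exp ((-μ.re - ε) * t) :=
    (isBigO_of_le _ fun t => by simp).trans
      (isLittleO_pow_exp_pos_mul_atTop k (by linarith)).isBigO
  refine (hexp.mul hpow).congr_right fun t => ?_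
  rw [← Real.exp_add]
  ring_nf

theorem Matrix.isBigO_exp_smul_mulVec_of_pow_mulVec_eq_zero {B : Matrix ι ι ℂ} {μ : ℂ} {ε : ℝ}
    (hμ : μ.re < -ε) {v : ι → ℂ} {K : ℕ} (hv : (B - μ • 1) ^ K *ᵥ v = 0) :
    (fun t : ℝ => exp (t • B) *ᵥ v) =O[atTop] fun t => Real.exp (-ε * t) := by
  set N := B - μ • 1
  have hexp (t : ℝ) : exp (t • B) *ᵥ v = ∑ k ∈ Finset.range K,
      ((k ! : ℂ)⁻¹ * (Complex.exp (t * μ) * (t : ℂ) ^ k)) • (N ^ k *ᵥ v) := by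
    have hsplit : t • B = (t : ℂ) • N + ((t : ℂ) * μ) • (1 : Matrix ι ι ℂ) := by
      rw [mul_smul, ← smul_add, sub_add_cancel, Complex.coe_smul]
    have hcomm : Commute ((t : ℂ) • N) (((t : ℂ) * μ) • (1 : Matrix ι ι ℂ)) :=
      (Commute.one_right _).smul_right _
    have hnil : ((t : ℂ) • N) ^ K *ᵥ v = 0 := by rw [smul_pow, smul_mulVec, hv, smul_zero]
    rw [hsplit, exp_add_of_commute _ _ hcomm, exp_smul_one, mul_smul_comm, mul_one, smul_mulVec,
      exp_mulVec_eq_sum_of_pow_mulVec_eq_zero hnil, Finset.smul_sum]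
    refine Finset.sum_congr rfl fun k _ => ?_
    rw [smul_pow, smul_mulVec, smul_smul, smul_smul]
    ring_nf
  simp_rw [hexp]
  refine IsBigO.fun_sum fun k _ => ?_
  simpa using (((isBigO_cexp_mul_pow hμ k).const_mul_left (k ! : ℂ)⁻¹).smul
    (isBigO_const_const (N ^ k *ᵥ v) (one_ne_zero : (1 : ℝ) ≠ 0) atTop))

theorem Matrix.isBigO_exp_smul_mulVec {B : Matrix ι ι ℂ} {ε : ℝ}
    (hB : ∀ μ ∈ spectrum ℂ B, μ.re < -ε) (v : ι → ℂ) :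
    (fun t : ℝ => exp (t • B) *ᵥ v) =O[atTop] fun t => Real.exp (-ε * t) := by
  let S : Submodule ℂ (ι → ℂ) :=
    { carrier := {v | (fun t : ℝ => exp (t • B) *ᵥ v) =O[atTop] fun t => Real.exp (-ε * t)}
      zero_mem' := (isBigO_zero _ _).congr_left fun t => (mulVec_zero _).symm
      add_mem' := fun h₁ h₂ => (h₁.add h₂).congr_left fun t => (mulVec_add _ _ _).symm
      smul_mem' := fun c v h => (h.const_smul_left c).congr_left fun t => (mulVec_smul _ c v).symm }
  suffices ⊤ ≤ S from this Submodule.mem_top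
  rw [← Module.End.iSup_maxGenEigenspace_eq_top (toLinAlgEquiv' B)]
  refine iSup_le fun μ w hw => ?_
  rcases eq_or_ne w 0 with rfl | hw0
  · exact S.zero_mem
  obtain ⟨K, hK⟩ := (Module.End.mem_maxGenEigenspace _ _ _).mp hw
  have hμ : μ ∈ spectrum ℂ B := by
    rw [← AlgEquiv.spectrum_eq toLinAlgEquiv' B]
    exact (Module.End.HasUnifEigenvalue.lt zero_lt_one
      ((Submodule.ne_bot_iff _).mpr ⟨w, hw, hw0⟩)).mem_spectrum
  refine isBigO_exp_smul_mulVec_of_pow_mulVec_eq_zero (hB μ hμ) (K := K) ?_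
  rwa [← toLinAlgEquiv'_apply, map_pow, map_sub, map_smul, map_one]

open scoped Matrix.Norms.Operator in
theorem Matrix.exp_map_ofReal (A : Matrix ι ι ℝ) :
    exp (A.map Complex.ofReal) = (exp A).map Complex.ofReal :=
  (map_exp Complex.ofRealHom.mapMatrix (continuous_id.matrix_map Complex.continuous_ofReal) A).symm

end ExpDecay

theorem IsHurwitz.exists_isBigO_exp_smul_apply {n : ℕ} {A : Matrix (Fin n) (Fin n) ℝ}
    (hA : IsHurwitz A) :
    ∃ ε > 0, ∀ i j, (fun t : ℝ => exp (t • A) i j) =O[atTop] fun t => Real.exp (-ε * t) := by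
  set B := A.map Complex.ofReal
  obtain ⟨ε, hB, hε⟩ : ∃ ε, (∀ μ ∈ spectrum ℂ B, μ.re < -ε) ∧ 0 < ε := by
    refine (((eventually_all_finite (finite_spectrum B)).mpr fun μ hμ => ?_).and
      self_mem_nhdsWithin).exists (f := 𝓝[>] (0 : ℝ))
    filter_upwards [(eventually_lt_nhds (neg_pos.mpr (hA μ hμ))).filter_mono nhdsWithin_le_nhds]
      with ε hε using by linarith
  refine ⟨ε, hε, fun i j => ?_⟩
  have hentry := isBigO_pi.mp (isBigO_exp_smul_mulVec hB (Pi.single j 1)) i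
  refine (isBigO_of_le _ fun t => ?_).trans hentry
  have hsmul : t • B = (t • A).map Complex.ofReal := by ext; simp [B]
  simp [hsmul, exp_map_ofReal]

section EntrywiseIntegral

variable {l m n X : Type*} [MeasurableSpace X] {μ : Measure X} {F : X → Matrix m n ℝ}

theorem Matrix.mul_of_integral [Fintype m] (hF : ∀ i j, Integrable (fun t => F t i j) μ)
    (M : Matrix l m ℝ) :
    M * of (fun i j => ∫ t, F t i j ∂μ) = of fun i j => ∫ t, (M * F t) i j ∂μ := by
  ext i j
  simp only [mul_apply, of_apply]
  rw [integral_finsetSum _ fun k _ => (hF k j).const_mul _]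
  simp_rw [integral_const_mul]

theorem Matrix.of_integral_mul [Fintype n] (hF : ∀ i j, Integrable (fun t => F t i j) μ)
    (M : Matrix n l ℝ) :
    of (fun i j => ∫ t, F t i j ∂μ) * M = of fun i j => ∫ t, (F t * M) i j ∂μ := by
  ext i j
  simp only [mul_apply, of_apply]
  rw [integral_finsetSum _ fun k _ => (hF i k).mul_const _]
  simp_rw [integral_mul_const]

theorem Matrix.dotProduct_of_integral_mulVec [Fintype m] [Fintype n]
    (hF : ∀ i j, Integrable (fun t => F t i j) μ) (x : m → ℝ) (y : n → ℝ) :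
    x ⬝ᵥ of (fun i j => ∫ t, F t i j ∂μ) *ᵥ y = ∫ t, x ⬝ᵥ F t *ᵥ y ∂μ := by
  simp only [dotProduct, mulVec, of_apply, Finset.mul_sum]
  rw [integral_finsetSum _ fun i _ => integrable_finsetSum _ fun j _ =>
    ((hF i j).mul_const _).const_mul _]
  refine Finset.sum_congr rfl fun i _ => ?_
  rw [integral_finsetSum _ fun j _ => ((hF i j).mul_const _).const_mul _]
  simp_rw [integral_const_mul, integral_mul_const]

end EntrywiseIntegral

section Gramian

variable {n : ℕ}

noncomputable def gramianIntegrand (A Q : Matrix (Fin n) (Fin n) ℝ) (t : ℝ) :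
    Matrix (Fin n) (Fin n) ℝ :=
  exp (t • Aᵀ) * Q * exp (t • A)

noncomputable def lyapunovGramian (A Q : Matrix (Fin n) (Fin n) ℝ) : Matrix (Fin n) (Fin n) ℝ :=
  of fun i j => ∫ t in Ioi (0 : ℝ), gramianIntegrand A Q t i j

variable {A Q : Matrix (Fin n) (Fin n) ℝ}

open scoped Matrix.Norms.Operator in
theorem hasDerivAt_gramianIntegrand_apply (t : ℝ) (i j : Fin n) :
    HasDerivAt (fun u => gramianIntegrand A Q u i j)
      ((Aᵀ * gramianIntegrand A Q t + gramianIntegrand A Q t * A) i j) t := by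
  have hF : HasDerivAt (gramianIntegrand A Q)
      (Aᵀ * exp (t • Aᵀ) * Q * exp (t • A) + exp (t • Aᵀ) * Q * (exp (t • A) * A)) t :=
    ((hasDerivAt_exp_smul_const' Aᵀ t).mul_const Q).mul (hasDerivAt_exp_smul_const A t)
  have hentry := (entryLinearMap ℝ ℝ i j).toContinuousLinearMap.hasFDerivAt.comp_hasDerivAt t hF
  have hderiv : Aᵀ * exp (t • Aᵀ) * Q * exp (t • A) + exp (t • Aᵀ) * Q * (exp (t • A) * A)
      = Aᵀ * gramianIntegrand A Q t + gramianIntegrand A Q t * A := by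
    simp only [gramianIntegrand]; noncomm_ring
  rw [hderiv] at hentry
  exact hentry

theorem continuous_gramianIntegrand_apply (i j : Fin n) :
    Continuous fun t => gramianIntegrand A Q t i j :=
  continuous_iff_continuousAt.mpr fun t => (hasDerivAt_gramianIntegrand_apply t i j).continuousAt

theorem IsHurwitz.exists_isBigO_gramianIntegrand_apply (hA : IsHurwitz A) :
    ∃ ε > 0, ∀ i j,
      (fun t => gramianIntegrand A Q t i j) =O[atTop] fun t => Real.exp (-ε * t) := by
  obtain ⟨ε, hε, hdecay⟩ := hA.exists_isBigO_exp_smul_apply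
  refine ⟨2 * ε, by positivity, fun i j => ?_⟩
  have hF (t : ℝ) : gramianIntegrand A Q t i j
      = ∑ k, ∑ l, exp (t • A) l i * (Q l k * exp (t • A) k j) := by
    simp only [gramianIntegrand, ← transpose_smul, exp_transpose, mul_apply, transpose_apply,
      Finset.sum_mul, mul_assoc]
  simp_rw [hF]
  refine IsBigO.fun_sum fun k _ => IsBigO.fun_sum fun l _ => ?_
  refine ((hdecay l i).mul ((hdecay k j).const_mul_left (Q l k))).congr_right fun t => ?_
  rw [← Real.exp_add]
  ring_nf

theorem IsHurwitz.integrableOn_gramianIntegrand_apply (hA : IsHurwitz A) (i j : Fin n) :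
    IntegrableOn (fun t => gramianIntegrand A Q t i j) (Ioi 0) := by
  obtain ⟨ε, hε, hF⟩ := hA.exists_isBigO_gramianIntegrand_apply (Q := Q)
  exact integrable_of_isBigO_exp_neg hε (continuous_gramianIntegrand_apply i j).continuousOn
    (hF i j)

theorem IsHurwitz.tendsto_gramianIntegrand_apply (hA : IsHurwitz A) (i j : Fin n) :
    Tendsto (fun t => gramianIntegrand A Q t i j) atTop (𝓝 0) := by
  obtain ⟨ε, hε, hF⟩ := hA.exists_isBigO_gramianIntegrand_apply (Q := Q)
  exact (hF i j).trans_tendsto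
    (Real.tendsto_exp_atBot.comp (tendsto_id.const_mul_atTop_of_neg (neg_lt_zero.mpr hε)))

theorem IsHurwitz.lyapunov_lyapunovGramian (hA : IsHurwitz A) :
    Aᵀ * lyapunovGramian A Q + lyapunovGramian A Q * A = -Q := by
  have hF := hA.integrableOn_gramianIntegrand_apply (Q := Q)
  rw [lyapunovGramian, mul_of_integral hF, of_integral_mul hF]
  ext i j
  have hleft : IntegrableOn (fun t => (Aᵀ * gramianIntegrand A Q t) i j) (Ioi 0) := by
    simp only [mul_apply]
    exact integrable_finsetSum _ fun k _ => (hF k j).const_mul _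
  have hright : IntegrableOn (fun t => (gramianIntegrand A Q t * A) i j) (Ioi 0) := by
    simp only [mul_apply]
    exact integrable_finsetSum _ fun k _ => (hF i k).mul_const _
  rw [Matrix.add_apply, of_apply, of_apply, ← integral_add hleft hright]
  simp_rw [← Matrix.add_apply]
  rw [integral_Ioi_of_hasDerivAt_of_tendsto
    (continuous_gramianIntegrand_apply i j).continuousWithinAt
    (fun t _ => hasDerivAt_gramianIntegrand_apply t i j) (hleft.add hright)
    (hA.tendsto_gramianIntegrand_apply i j)]
  simp [gramianIntegrand]

theorem posDef_gramianIntegrand (hQ : Q.PosDef) (t : ℝ) : (gramianIntegrand A Q t).PosDef := by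
  have hstar : exp (t • Aᵀ) = star (exp (t • A)) := by
    rw [star_eq_conjTranspose, conjTranspose_eq_transpose_of_trivial, ← exp_transpose,
      transpose_smul]
  rw [gramianIntegrand, hstar]
  exact (IsUnit.posDef_star_left_conjugate_iff (isUnit_exp _)).mpr hQ

theorem IsHurwitz.posDef_lyapunovGramian (hA : IsHurwitz A) (hQ : Q.PosDef) :
    (lyapunovGramian A Q).PosDef := by
  have hF := hA.integrableOn_gramianIntegrand_apply (Q := Q)
  have hFpos := posDef_gramianIntegrand (A := A) hQ
  refine posDef_iff_dotProduct_mulVec.mpr ⟨?_, fun x hx => ?_⟩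
  · ext i j
    simp only [lyapunovGramian, conjTranspose_apply, of_apply, star_trivial]
    exact integral_congr_ae (ae_of_all _ fun t => (hFpos t).isHermitian.apply i j)
  · have hint : IntegrableOn (fun t => x ⬝ᵥ gramianIntegrand A Q t *ᵥ x) (Ioi 0) := by
      simp only [dotProduct, mulVec]
      exact integrable_finsetSum _ fun i _ =>
        (integrable_finsetSum _ fun j _ => (hF i j).mul_const _).const_mul _
    have hpos (t : ℝ) : 0 < x ⬝ᵥ gramianIntegrand A Q t *ᵥ x := by
      simpa using (hFpos t).dotProduct_mulVec_pos hx
    rw [star_trivial, lyapunovGramian, dotProduct_of_integral_mulVec hF,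
      setIntegral_pos_iff_support_of_nonneg_ae (ae_of_all _ fun t => (hpos t).le) hint,
      (inter_eq_right (s := Function.support _)).mpr fun t _ => (hpos t).ne', Real.volume_Ioi]
    exact ENNReal.zero_lt_top

end Gramian

theorem sum_abs_le_rowSumNorm {m n : Type*} [Finite m] [Fintype n] (M : Matrix m n ℝ) (k : m) :
    ∑ j, |M k j| ≤ rowSumNorm M :=
  le_ciSup (f := fun i => ∑ j, |M i j|) (Set.finite_range _).bddAbove k

section DiagonalDominance

variable {ι α : Type*} [Fintype ι] [DecidableEq ι] [Fintype α] [DecidableEq α]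

theorem Matrix.negDef_sub_diagonal_of_sum_abs_lt {X : Matrix ι ι ℝ} (hX : X.IsSymm)
    {d : ι → ℝ} (hd : ∀ i, ∑ j, |X i j| < d i) : (X - diagonal d).NegDef := by
  intro x hx
  have hamgm (i j : ι) : x i * (X i j * x j) ≤ |X i j| * ((x i ^ 2 + x j ^ 2) / 2) :=
    calc x i * (X i j * x j) ≤ |x i * (X i j * x j)| := le_abs_self _
      _ = |X i j| * (|x i| * |x j|) := by rw [abs_mul, abs_mul]; ring
      _ ≤ |X i j| * ((x i ^ 2 + x j ^ 2) / 2) := by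
        gcongr
        nlinarith [sq_nonneg (|x i| - |x j|), sq_abs (x i), sq_abs (x j)]
  have hswap : ∑ i, ∑ j, |X i j| * x j ^ 2 = ∑ i, ∑ j, |X i j| * x i ^ 2 := by
    rw [Finset.sum_comm]
    simp_rw [hX.apply]
  have hX_le : x ⬝ᵥ X *ᵥ x ≤ ∑ i, (∑ j, |X i j|) * x i ^ 2 :=
    calc x ⬝ᵥ X *ᵥ x = ∑ i, ∑ j, x i * (X i j * x j) := by
          simp only [dotProduct, mulVec, Finset.mul_sum]
      _ ≤ ∑ i, ∑ j, |X i j| * ((x i ^ 2 + x j ^ 2) / 2) :=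
          Finset.sum_le_sum fun i _ => Finset.sum_le_sum fun j _ => hamgm i j
      _ = (∑ i, ∑ j, |X i j| * x i ^ 2 + ∑ i, ∑ j, |X i j| * x j ^ 2) / 2 := by
          simp only [mul_add, add_div, Finset.sum_add_distrib, Finset.sum_div, mul_div_assoc]
      _ = ∑ i, (∑ j, |X i j|) * x i ^ 2 := by
          rw [hswap, add_self_div_two]
          simp only [Finset.sum_mul]
  obtain ⟨i₀, hi₀⟩ : ∃ i, x i ≠ 0 := Function.ne_iff.mp hx
  have hlt : ∑ i, (∑ j, |X i j|) * x i ^ 2 < ∑ i, d i * x i ^ 2 :=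
    Finset.sum_lt_sum (fun i _ => mul_le_mul_of_nonneg_right (hd i).le (sq_nonneg _))
      ⟨i₀, Finset.mem_univ _, mul_lt_mul_of_pos_right (hd i₀) (sq_pos_of_ne_zero hi₀)⟩
  have hdiag : x ⬝ᵥ diagonal d *ᵥ x = ∑ i, d i * x i ^ 2 := by
    simp only [mulVec_diagonal, dotProduct]
    exact Finset.sum_congr rfl fun i _ => by ring
  rw [sub_mulVec, dotProduct_sub, hdiag]
  linarith

theorem Matrix.negDef_fromBlocks_of_sum_abs_lt {M₁ : Matrix α ι ℝ} {M₂ : Matrix ι ι ℝ}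
    (hM₂ : M₂.IsSymm) {q : α → ℝ} {d : ι → ℝ} (h₁ : ∀ k, ∑ j, |M₁ k j| < q k)
    (h₂ : ∀ k, ∑ j, |M₁ j k| + ∑ j, |M₂ k j| < d k) :
    (fromBlocks (-diagonal q) (-M₁) (-M₁ᵀ) (M₂ - diagonal d)).NegDef := by
  have hsplit : fromBlocks (-diagonal q) (-M₁) (-M₁ᵀ) (M₂ - diagonal d)
      = fromBlocks 0 (-M₁) (-M₁ᵀ) M₂ - diagonal (Sum.elim q d) := by
    rw [← fromBlocks_diagonal, sub_eq_add_neg _ (fromBlocks _ _ _ _), fromBlocks_neg,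
      fromBlocks_add]
    simp [sub_eq_add_neg]
  rw [hsplit]
  refine negDef_sub_diagonal_of_sum_abs_lt (isSymm_zero.fromBlocks (by simp) hM₂) ?_
  rintro (k | k)
  · simpa [Fintype.sum_sum_type] using h₁ k
  · simpa [Fintype.sum_sum_type] using h₂ k

end DiagonalDominance

theorem lmi_eq_fromBlocks {α ι : Type*} [Fintype α] [Fintype ι] [DecidableEq α] [DecidableEq ι]
    {P : Matrix α α ℝ} (hP : P.IsSymm) (G Nπx : Matrix α α ℝ) (Nπw : Matrix α ι ℝ)
    (Nξx : Matrix ι α ℝ) (Nξw : Matrix ι ι ℝ) (β lam : ι → ℝ) :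
    (fromBlocks (1 : Matrix α α ℝ) 0 Nπx Nπw)ᵀ * fromBlocks G P P 0
          * fromBlocks (1 : Matrix α α ℝ) 0 Nπx Nπw
        + (fromBlocks Nξx Nξw (0 : Matrix ι α ℝ) 1)ᵀ * (Psi (fun _ => 0) β)ᵀ * Mmat lam
          * Psi (fun _ => 0) β * fromBlocks Nξx Nξw (0 : Matrix ι α ℝ) 1
      = fromBlocks (G + Nπxᵀ * P + P * Nπx)
          (-(-(P * Nπw) - Nξxᵀ * diagonal (fun i => lam i * β i)))
          (-(-(P * Nπw) - Nξxᵀ * diagonal (fun i => lam i * β i))ᵀ)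
          (diagonal (fun i => lam i * β i) * Nξw + Nξwᵀ * diagonal (fun i => lam i * β i)
            - diagonal (fun i => 2 * lam i)) := by
  have hβl : diagonal β * diagonal lam = diagonal (fun i => lam i * β i) := by
    rw [diagonal_mul_diagonal]; simp_rw [mul_comm]
  have hlβ : diagonal lam * diagonal β = diagonal (fun i => lam i * β i) :=
    diagonal_mul_diagonal _ _
  have h2l : diagonal (fun i => 2 * lam i) = diagonal lam + diagonal lam := by
    rw [diagonal_add]; simp_rw [two_mul]
  simp only [Psi, Mmat, fromBlocks_transpose, fromBlocks_multiply, fromBlocks_add,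
    transpose_transpose, diagonal_transpose, hP.eq, transpose_neg, transpose_sub, transpose_mul,
    transpose_one, transpose_zero]
  congr 1 <;> simp only [one_mul, mul_one, mul_zero, add_zero, zero_add, mul_neg, neg_mul,
    Matrix.mul_one, Matrix.mul_zero, Matrix.zero_mul, Matrix.mul_neg, Matrix.add_mul,
    Matrix.mul_assoc, neg_zero, neg_sub, sub_neg_eq_add, diagonal_zero, hβl, hlβ]
  · abel
  · abel
  · rw [h2l]
    abel

open NormedSpace in
theorem LMI_solution_exists_of_observable_general
    {ns no : ℕ} (A : Matrix (Fin ns) (Fin ns) ℝ)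
    (C : Matrix (Fin no) (Fin ns) ℝ)
    (net : ResNet no ns)
    (β : net.NIdx → ℝ)
    (hHurwitz : IsHurwitz (A + net.Wskip * C))
    (q : Fin ns → ℝ) (hq : ∀ i, 0 < q i)
    (P : Matrix (Fin ns) (Fin ns) ℝ)
    (hPdef : P = Matrix.of fun i j => ∫ t in Set.Ioi (0 : ℝ),
      (exp (t • (A + net.Wskip * C)ᵀ) * Matrix.diagonal q
        * exp (t • (A + net.Wskip * C))) i j)
    (lam : net.NIdx → ℝ)
    (hi : rowSumNorm (-(P * net.Npiw) - (net.Nxix C)ᵀ * Matrix.diagonal (fun i => lam i * β i))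
        < ⨅ i, q i)
    (hii : rowSumNorm (-(P * net.Npiw) - (net.Nxix C)ᵀ
          * Matrix.diagonal (fun i => lam i * β i))ᵀ
        + rowSumNorm (Matrix.diagonal (fun i => lam i * β i) * net.Nxiw
          + net.Nxiwᵀ * Matrix.diagonal (fun i => lam i * β i))
        < 2 * ⨅ i, lam i) :
    P.PosDef ∧ Matrix.NegDef
      ((net.Rpi C)ᵀ * Matrix.fromBlocks (Aᵀ * P + P * A) P P 0 * net.Rpi C
        + (net.Rxi C)ᵀ * (Psi (fun _ => (0 : ℝ)) β)ᵀ * Mmat lam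
          * Psi (fun _ => (0 : ℝ)) β * net.Rxi C) := by
  have hP : P = lyapunovGramian (A + net.Wskip * C) (diagonal q) := hPdef
  have hPpos : P.PosDef := hP ▸ hHurwitz.posDef_lyapunovGramian (PosDef.diagonal hq)
  have hG : Aᵀ * P + P * A + (net.Wskip * C)ᵀ * P + P * (net.Wskip * C) = -diagonal q := by
    rw [← hHurwitz.lyapunov_lyapunovGramian, ← hP, transpose_add, Matrix.add_mul, Matrix.mul_add]
    abel
  have hM₂ : (diagonal (fun i => lam i * β i) * net.Nxiw
      + net.Nxiwᵀ * diagonal (fun i => lam i * β i)).IsSymm := by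
    simpa using isSymm_add_transpose_self (diagonal (fun i => lam i * β i) * net.Nxiw)
  refine ⟨hPpos, ?_⟩
  rw [ResNet.Rpi, ResNet.Rxi, lmi_eq_fromBlocks (isHermitian_iff_isSymm.mp hPpos.isHermitian), hG]
  refine negDef_fromBlocks_of_sum_abs_lt hM₂ (fun k => ?_) (fun k => ?_)
  · exact (sum_abs_le_rowSumNorm _ k).trans_lt
      (hi.trans_le (ciInf_le (Set.finite_range q).bddBelow k))
  · calc _ ≤ _ := add_le_add (sum_abs_le_rowSumNorm _ k) (sum_abs_le_rowSumNorm _ k)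
      _ < 2 * ⨅ i, lam i := hii
      _ ≤ 2 * lam k := by gcongr; exact ciInf_le (Set.finite_range lam).bddBelow k

open NormedSpace in
/-- Sufficiency part of Proposition 2: with `α = 0`, `Ã = A + W^{L+2}C` Hurwitz (possible by
pole assignment when `(C,A)` is observable), `Q` diagonal positive, and
`P = ∫₀^∞ e^{Ãᵀt} Q e^{Ãt} dt`, the diagonal-dominance conditions (i)–(ii) imply that `P` is a
symmetric positive definite solution of the LMI. -/
theorem LMI_solution_exists_of_observable
    {ns no : ℕ} (A : Matrix (Fin ns) (Fin ns) ℝ)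
    (C : Matrix (Fin no) (Fin ns) ℝ)
    {σ : ℝ → ℝ} (hσ0 : σ 0 = 0)
    (net : ResNet no ns)
    (β : net.NIdx → ℝ) (hβ : ∀ i, 0 ≤ β i)
    (hsec : ∀ i : net.NIdx, SectorBounded σ 0 (β i))
    (hHurwitz : IsHurwitz (A + net.Wskip * C))
    (q : Fin ns → ℝ) (hq : ∀ i, 0 < q i)
    (P : Matrix (Fin ns) (Fin ns) ℝ)
    (hPdef : P = Matrix.of fun i j => ∫ t in Set.Ioi (0 : ℝ),
      (exp (t • (A + net.Wskip * C)ᵀ) * Matrix.diagonal q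
        * exp (t • (A + net.Wskip * C))) i j)
    (lam : net.NIdx → ℝ) (hlam : ∀ i, 0 < lam i)
    (hi : rowSumNorm (-(P * net.Npiw) - (net.Nxix C)ᵀ * Matrix.diagonal (fun i => lam i * β i))
        < ⨅ i, q i)
    (hii : rowSumNorm (-(P * net.Npiw) - (net.Nxix C)ᵀ
          * Matrix.diagonal (fun i => lam i * β i))ᵀ
        + rowSumNorm (Matrix.diagonal (fun i => lam i * β i) * net.Nxiw
          + net.Nxiwᵀ * Matrix.diagonal (fun i => lam i * β i))
        < 2 * ⨅ i, lam i) :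
    P.PosDef ∧ Matrix.NegDef
      ((net.Rpi C)ᵀ * Matrix.fromBlocks (Aᵀ * P + P * A) P P 0 * net.Rpi C
        + (net.Rxi C)ᵀ * (Psi (fun _ => (0 : ℝ)) β)ᵀ * Mmat lam
          * Psi (fun _ => (0 : ℝ)) β * net.Rxi C) :=
  LMI_solution_exists_of_observable_general A C net β hHurwitz q hq P hPdef lam hi hii
end

section
/- Let n ≥ 1, ε > 0, and let π₁, …, π_{n+1} : ℝ → ℝ be functions (e.g. residual networks with scalar input and output). Let Ã ∈ ℝ^{(n+1)×(n+1)} be the upper shift matrix (Ã_{i,i+1} = 1, all other entries 0). Suppose P ∈ ℝ^{(n+1)×(n+1)} is symmetric positive definite with smallest eigenvalue λ₁ and largest eigenvalue λ₂, and suppose λ₃ > 0 is such that for all η ∈ ℝ^{n+1}, writing 𝛑(η₁) = (π₁(η₁), …, π_{n+1}(η₁)) ∈ ℝ^{n+1}: ηᵀ(ÃᵀP + PÃ)η − 2 ηᵀP𝛑(η₁) ≤ −λ₃ ‖η‖₂². Let h : [0,∞) → ℝ satisfy |h(t)| ≤ M₀ for all t ≥ 0, and let η : [0,∞) → ℝ^{n+1}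 be differentiable with ε η̇_i(t) = η_{i+1}(t) − π_i(η₁(t)) for i = 1, …, n and ε η̇_{n+1}(t) = −π_{n+1}(η₁(t)) + ε h(t). Then, with V₀(η) = ηᵀPη and M₁ = 2ελ₂²M₀/(λ₃√λ₁), for all t ≥ 0: √(V₀(η(t))) ≤ (√(V₀(η(0))) − M₁) e^{−λ₃ t/(2ελ₂)} + M₁. -/
/-!
Along the error system `V₀ = ηᵀPη` has derivative
`ε⁻¹ (ηᵀ(ÃᵀP + PÃ)η - 2ηᵀP𝛑(η₁) + 2εh ηᵀPe_{n+1})`. The Lyapunov inequality, Cauchy–Schwarz for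
`P` and `λ₁‖η‖² ≤ V₀ ≤ λ₂‖η‖²` bound it by `-(λ₃/(ελ₂)) V₀ + 2(λ₂M₀/√λ₁) √V₀`, a linear
differential inequality for `√V₀` that the linear Grönwall inequality integrates. As `√V₀` need not
be differentiable where `V₀` vanishes, the argument is run for `√(V₀ + δ²)` and `δ → 0`.
-/

open Matrix

/-- the `(n+1) × (n+1)` upper shift matrix `Ã`. -/
def shiftMat (n : ℕ) : Matrix (Fin (n + 1)) (Fin (n + 1)) ℝ :=
  Matrix.of fun i j => if (i : ℕ) + 1 = (j : ℕ) then 1 else 0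

theorem le_of_hasDerivAt_le_neg_mul_add {u u' : ℝ → ℝ} {k b : ℝ} (hk : k ≠ 0)
    (hu : ∀ t, 0 ≤ t → HasDerivAt u (u' t) t) (hbound : ∀ t, 0 ≤ t → u' t ≤ -k * u t + b)
    {t : ℝ} (ht : 0 ≤ t) :
    u t ≤ (u 0 - b / k) * Real.exp (-(k * t)) + b / k := by
  have hgronwall := le_gronwallBound_of_liminf_deriv_right_le
    (fun s hs => (hu s hs.1).continuousAt.continuousWithinAt)
    (fun s hs _ hr => (hu s hs.1).hasDerivWithinAt.liminf_right_slope_le hr)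
    le_rfl (fun s hs => hbound s hs.1) t ⟨ht, le_rfl⟩
  rw [gronwallBound_of_K_ne_0 (neg_ne_zero.2 hk), sub_zero] at hgronwall
  convert hgronwall using 1
  field_simp
  ring_nf

theorem sqrt_add_sq_le_sqrt_add {a δ : ℝ} (ha : 0 ≤ a) (hδ : 0 ≤ δ) : √(a + δ ^ 2) ≤ √a + δ := by
  rw [Real.sqrt_le_iff]
  refine ⟨by positivity, ?_⟩
  nlinarith [Real.sq_sqrt ha, Real.sqrt_nonneg a]

theorem sqrt_le_of_hasDerivAt_le_neg_mul_add_sqrt {V V' : ℝ → ℝ} {k c : ℝ} (hk : 0 < k)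
    (hc : 0 ≤ c) (hV : ∀ t, 0 ≤ t → 0 ≤ V t) (hV' : ∀ t, 0 ≤ t → HasDerivAt V (V' t) t)
    (hbound : ∀ t, 0 ≤ t → V' t ≤ -(2 * k) * V t + 2 * c * √(V t)) {t : ℝ} (ht : 0 ≤ t) :
    √(V t) ≤ (√(V 0) - c / k) * Real.exp (-(k * t)) + c / k := by
  refine le_of_forall_pos_le_add fun δ hδ => ?_
  set W : ℝ → ℝ := fun s => √(V s + δ ^ 2)
  have hW_sq : ∀ s, 0 ≤ s → W s ^ 2 = V s + δ ^ 2 := fun s hs =>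
    Real.sq_sqrt (by nlinarith [hV s hs])
  have hδ_le : ∀ s, 0 ≤ s → δ ≤ W s := fun s hs =>
    Real.le_sqrt_of_sq_le (by linarith [hV s hs])
  have hsqrt_le : ∀ s, 0 ≤ s → √(V s) ≤ W s := fun s hs =>
    Real.sqrt_le_sqrt (by nlinarith)
  have hW' : ∀ s, 0 ≤ s → HasDerivAt W (V' s / (2 * W s)) s := fun s hs =>
    ((hV' s hs).add_const _).sqrt (by nlinarith [hV s hs])
  have hW_bound : ∀ s, 0 ≤ s → V' s / (2 * W s) ≤ -k * W s + (c + k * δ) := by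
    intro s hs
    have hWpos : 0 < W s := hδ.trans_le (hδ_le s hs)
    rw [div_le_iff₀ (by positivity)]
    nlinarith [hbound s hs, hW_sq s hs, mul_le_mul_of_nonneg_left (hsqrt_le s hs) hc,
      mul_le_mul_of_nonneg_left (hδ_le s hs) (mul_nonneg hk.le hδ.le)]
  calc √(V t) ≤ W t := hsqrt_le t ht
    _ ≤ (W 0 - (c + k * δ) / k) * Real.exp (-(k * t)) + (c + k * δ) / k :=
      le_of_hasDerivAt_le_neg_mul_add hk.ne' hW' hW_bound ht
    _ ≤ (√(V 0) + δ - (c + k * δ) / k) * Real.exp (-(k * t)) + (c + k * δ) / k := by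
      gcongr
      exact sqrt_add_sq_le_sqrt_add (hV 0 le_rfl) hδ.le
    _ = (√(V 0) - c / k) * Real.exp (-(k * t)) + c / k + δ := by
      field_simp
      ring

namespace Matrix

variable {ι : Type*} [Fintype ι]

theorem IsSymm.dotProduct_mulVec_comm {R : Type*} [CommSemiring R] {A : Matrix ι ι R}
    (hA : A.IsSymm) (x y : ι → R) : x ⬝ᵥ A *ᵥ y = y ⬝ᵥ A *ᵥ x := by
  rw [dotProduct_mulVec, ← mulVec_transpose, hA.eq, dotProduct_comm]

theorem IsSymm.dotProduct_transpose_mul_add_mul_mulVec {R : Type*} [CommRing R]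
    {P : Matrix ι ι R} (hP : P.IsSymm) (A : Matrix ι ι R) (x : ι → R) :
    x ⬝ᵥ (Aᵀ * P + P * A) *ᵥ x = 2 * (x ⬝ᵥ P *ᵥ (A *ᵥ x)) := by
  rw [add_mulVec, dotProduct_add, ← mulVec_mulVec, ← mulVec_mulVec, mulVec_transpose,
    dotProduct_comm x, ← dotProduct_mulVec, dotProduct_comm (P *ᵥ x),
    hP.dotProduct_mulVec_comm (A *ᵥ x), two_mul]

theorem PosSemidef.dotProduct_mulVec_sq_le {A : Matrix ι ι ℝ} (hA : A.PosSemidef)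
    (x y : ι → ℝ) : (x ⬝ᵥ A *ᵥ y) ^ 2 ≤ (x ⬝ᵥ A *ᵥ x) * (y ⬝ᵥ A *ᵥ y) := by
  classical
  have hsymm : A.IsSymm := isHermitian_iff_isSymm.1 hA.1
  have := (toBilin' A).apply_mul_apply_le_of_forall_zero_le
    (fun z => by simpa [toBilin'_apply'] using hA.dotProduct_mulVec_nonneg z) x y
  simpa only [toBilin'_apply', hsymm.dotProduct_mulVec_comm y x, ← sq] using this

end Matrix

section Derivatives

variable {ι : Type*} [Fintype ι]

theorem HasDerivAt.dotProduct {x y : ℝ → ι → ℝ} {x' y' : ι → ℝ} {t : ℝ}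
    (hx : HasDerivAt x x' t) (hy : HasDerivAt y y' t) :
    HasDerivAt (fun s => x s ⬝ᵥ y s) (x' ⬝ᵥ y t + x t ⬝ᵥ y') t := by
  have := HasDerivAt.fun_sum (u := Finset.univ) fun i _ =>
    (hasDerivAt_pi.1 hx i).fun_mul (hasDerivAt_pi.1 hy i)
  rwa [Finset.sum_add_distrib] at this

theorem HasDerivAt.mulVec {y : ℝ → ι → ℝ} {y' : ι → ℝ} {t : ℝ} (A : Matrix ι ι ℝ)
    (hy : HasDerivAt y y' t) : HasDerivAt (fun s => A *ᵥ y s) (A *ᵥ y') t :=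
  (LinearMap.toContinuousLinearMap (mulVecLin A)).hasFDerivAt.comp_hasDerivAt t hy

theorem HasDerivAt.dotProduct_mulVec_self {P : Matrix ι ι ℝ} (hP : P.IsSymm) {x : ℝ → ι → ℝ}
    {x' : ι → ℝ} {t : ℝ} (hx : HasDerivAt x x' t) :
    HasDerivAt (fun s => x s ⬝ᵥ P *ᵥ x s) (2 * (x t ⬝ᵥ P *ᵥ x')) t := by
  convert hx.dotProduct (hx.mulVec P) using 1
  rw [hP.dotProduct_mulVec_comm x', two_mul]

end Derivatives

theorem norm2_single_one {ι : Type*} [Fintype ι] [DecidableEq ι] (i : ι) :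
    norm2 (Pi.single i 1 : ι → ℝ) = 1 := by
  simp [norm2, Pi.single_apply, apply_ite (· ^ 2)]

theorem abs_dotProduct_mulVec_le_of_norm2_eq_one {ι : Type*} [Fintype ι] {P : Matrix ι ι ℝ}
    (hP : P.PosSemidef) {l2 : ℝ} (hupp : ∀ x : ι → ℝ, x ⬝ᵥ P *ᵥ x ≤ l2 * norm2 x ^ 2) {y : ι → ℝ}
    (hy : norm2 y = 1) (x : ι → ℝ) : |x ⬝ᵥ P *ᵥ y| ≤ l2 * norm2 x := by
  have hy_le : y ⬝ᵥ P *ᵥ y ≤ l2 := by simpa [hy] using hupp y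
  have hx_nonneg : 0 ≤ x ⬝ᵥ P *ᵥ x := by simpa using hP.dotProduct_mulVec_nonneg x
  have hy_nonneg : 0 ≤ y ⬝ᵥ P *ᵥ y := by simpa using hP.dotProduct_mulVec_nonneg y
  apply abs_le_of_sq_le_sq _ (mul_nonneg (hy_nonneg.trans hy_le) (Real.sqrt_nonneg _))
  calc (x ⬝ᵥ P *ᵥ y) ^ 2 ≤ (x ⬝ᵥ P *ᵥ x) * (y ⬝ᵥ P *ᵥ y) := hP.dotProduct_mulVec_sq_le x y
    _ ≤ (l2 * norm2 x ^ 2) * l2 := mul_le_mul (hupp x) hy_le hy_nonneg (by linarith [hupp x])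
    _ = (l2 * norm2 x) ^ 2 := by ring

theorem shiftMat_mulVec_apply {n : ℕ} (x : Fin (n + 1) → ℝ) (i : Fin (n + 1)) :
    (shiftMat n *ᵥ x) i
      = if hi : (i : ℕ) < n then x ⟨(i : ℕ) + 1, Nat.succ_lt_succ hi⟩ else 0 := by
  split_ifs with hi
  · rw [mulVec, dotProduct, Finset.sum_eq_single ⟨(i : ℕ) + 1, Nat.succ_lt_succ hi⟩]
    · simp [shiftMat]
    · intro j _ hj
      simp [shiftMat, Fin.ext_iff] at hj ⊢
      omega
    · simp
  · rw [mulVec, dotProduct]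
    refine Finset.sum_eq_zero fun j _ => ?_
    simp only [shiftMat, of_apply, ite_mul, one_mul, zero_mul]
    exact if_neg (by omega)

/-- The right-hand side `η̇` of the error system at the state `x`, with `h(t) = a`. -/
noncomputable def errorField {n : ℕ} (ε : ℝ) (π : Fin (n + 1) → ℝ → ℝ) (a : ℝ)
    (x : Fin (n + 1) → ℝ) : Fin (n + 1) → ℝ := fun i =>
  if hi : (i : ℕ) < n then ε⁻¹ * (x ⟨(i : ℕ) + 1, Nat.succ_lt_succ hi⟩ - π i (x 0))
  else ε⁻¹ * (-π i (x 0) + ε * a)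

theorem errorField_eq {n : ℕ} (ε : ℝ) (π : Fin (n + 1) → ℝ → ℝ) (a : ℝ) (x : Fin (n + 1) → ℝ) :
    errorField ε π a x
      = ε⁻¹ • (shiftMat n *ᵥ x - (fun i => π i (x 0)) + (ε * a) • Pi.single (Fin.last n) 1) := by
  funext i
  by_cases hi : (i : ℕ) < n
  · have hi_last : i ≠ Fin.last n := fun h => by simp [h] at hi
    simp [errorField, shiftMat_mulVec_apply, hi, hi_last]
  · obtain rfl : i = Fin.last n := Fin.ext (by have := i.isLt; simp; omega)
    simp [errorField, shiftMat_mulVec_apply]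

section ErrorSystem

variable {n : ℕ} {ε : ℝ} {π : Fin (n + 1) → ℝ → ℝ} {P : Matrix (Fin (n + 1)) (Fin (n + 1)) ℝ}

theorem two_mul_dotProduct_mulVec_errorField (hP : P.IsSymm) (a : ℝ) (x : Fin (n + 1) → ℝ) :
    2 * (x ⬝ᵥ P *ᵥ errorField ε π a x)
      = ε⁻¹ * (x ⬝ᵥ ((shiftMat n)ᵀ * P + P * shiftMat n) *ᵥ x
          - 2 * (x ⬝ᵥ P *ᵥ fun i => π i (x 0))
          + 2 * (ε * a) * (x ⬝ᵥ P *ᵥ Pi.single (Fin.last n) 1)) := by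
  rw [errorField_eq, hP.dotProduct_transpose_mul_add_mul_mulVec, mulVec_smul, dotProduct_smul,
    mulVec_add, mulVec_sub, mulVec_smul, dotProduct_add, dotProduct_sub, dotProduct_smul]
  simp only [smul_eq_mul]
  ring

theorem two_mul_dotProduct_mulVec_errorField_le (hP : P.IsSymm) (hε : 0 < ε)
    {l1 l2 l3 M₀ a : ℝ} (hl1 : 0 < l1) (hl2 : 0 < l2) (hl3 : 0 ≤ l3) {x : Fin (n + 1) → ℝ}
    (hlow : l1 * norm2 x ^ 2 ≤ x ⬝ᵥ P *ᵥ x) (hupp : x ⬝ᵥ P *ᵥ x ≤ l2 * norm2 x ^ 2)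
    (hquad : x ⬝ᵥ ((shiftMat n)ᵀ * P + P * shiftMat n) *ᵥ x
        - 2 * (x ⬝ᵥ P *ᵥ fun i => π i (x 0)) ≤ -l3 * norm2 x ^ 2)
    (hlast : |x ⬝ᵥ P *ᵥ Pi.single (Fin.last n) 1| ≤ l2 * norm2 x) (ha : |a| ≤ M₀) :
    2 * (x ⬝ᵥ P *ᵥ errorField ε π a x)
      ≤ -(2 * (l3 / (2 * ε * l2))) * (x ⬝ᵥ P *ᵥ x)
        + 2 * (M₀ * l2 / √l1) * √(x ⬝ᵥ P *ᵥ x) := by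
  set V := x ⬝ᵥ P *ᵥ x
  set N := norm2 x
  have hN : 0 ≤ N := Real.sqrt_nonneg _
  have hM₀ : 0 ≤ M₀ := (abs_nonneg a).trans ha
  have hN_le : N ≤ √V / √l1 := by
    rw [le_div_iff₀ (Real.sqrt_pos.2 hl1), ← Real.sqrt_sq hN, ← Real.sqrt_mul' _ hl1.le]
    exact Real.sqrt_le_sqrt (by linarith)
  have hforcing : a * (x ⬝ᵥ P *ᵥ Pi.single (Fin.last n) 1) ≤ M₀ * (l2 * N) := by
    calc a * (x ⬝ᵥ P *ᵥ Pi.single (Fin.last n) 1)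
        ≤ |a| * |x ⬝ᵥ P *ᵥ Pi.single (Fin.last n) 1| := by rw [← abs_mul]; exact le_abs_self _
      _ ≤ M₀ * (l2 * N) := mul_le_mul ha hlast (abs_nonneg _) hM₀
  rw [two_mul_dotProduct_mulVec_errorField hP]
  calc ε⁻¹ * (x ⬝ᵥ ((shiftMat n)ᵀ * P + P * shiftMat n) *ᵥ x
          - 2 * (x ⬝ᵥ P *ᵥ fun i => π i (x 0))
          + 2 * (ε * a) * (x ⬝ᵥ P *ᵥ Pi.single (Fin.last n) 1))
      ≤ ε⁻¹ * (-l3 * N ^ 2 + 2 * ε * (M₀ * (l2 * N))) :=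
        mul_le_mul_of_nonneg_left
          (by linarith [mul_le_mul_of_nonneg_left hforcing (by positivity : (0 : ℝ) ≤ 2 * ε)])
          (inv_nonneg.2 hε.le)
    _ = 2 * (M₀ * l2) * N - l3 / ε * N ^ 2 := by field_simp; ring
    _ ≤ 2 * (M₀ * l2) * (√V / √l1) - l3 / ε * (V / l2) := by
        gcongr
        rwa [div_le_iff₀ hl2, mul_comm]
    _ = -(2 * (l3 / (2 * ε * l2))) * V + 2 * (M₀ * l2 / √l1) * √V := by
        field_simp
        ring

end ErrorSystem

/-- Gronwall-type estimate in the proof of Theorem 3: along the scaled error dynamics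
`ε η̇_i = η_{i+1} - π_i(η₁)` (`i = 1, …, n`), `ε η̇_{n+1} = -π_{n+1}(η₁) + ε h(t)`,
the Lyapunov function `V₀(η) = ηᵀ P η` satisfies
`√V₀(η(t)) ≤ (√V₀(η(0)) - M₁) e^{-λ₃ t/(2ελ₂)} + M₁` with `M₁ = 2ελ₂²M₀/(λ₃√λ₁)`. -/
theorem error_system_gronwall_estimate
    {n : ℕ} (ε : ℝ) (hε : 0 < ε)
    (π : Fin (n + 1) → ℝ → ℝ)
    (P : Matrix (Fin (n + 1)) (Fin (n + 1)) ℝ) (hP : P.PosDef)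
    (l1 l2 l3 : ℝ) (hl1 : 0 < l1) (hl3 : 0 < l3)
    (hlow : ∀ η : Fin (n + 1) → ℝ, l1 * norm2 η ^ 2 ≤ η ⬝ᵥ P.mulVec η)
    (hupp : ∀ η : Fin (n + 1) → ℝ, η ⬝ᵥ P.mulVec η ≤ l2 * norm2 η ^ 2)
    (hquad : ∀ η : Fin (n + 1) → ℝ,
      η ⬝ᵥ ((shiftMat n)ᵀ * P + P * shiftMat n).mulVec η
          - 2 * (η ⬝ᵥ P.mulVec (fun i => π i (η 0)))
        ≤ -l3 * norm2 η ^ 2)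
    (M₀ : ℝ) (h : ℝ → ℝ) (hh : ∀ t : ℝ, 0 ≤ t → |h t| ≤ M₀)
    (η : ℝ → Fin (n + 1) → ℝ)
    (hη : ∀ t : ℝ, 0 ≤ t → ∀ i : Fin (n + 1), HasDerivAt (fun s => η s i)
      (if hi : (i : ℕ) < n then ε⁻¹ * (η t ⟨(i : ℕ) + 1, by omega⟩ - π i (η t 0))
       else ε⁻¹ * (-π i (η t 0) + ε * h t)) t) :
    ∀ t : ℝ, 0 ≤ t →
      Real.sqrt (η t ⬝ᵥ P.mulVec (η t))
        ≤ (Real.sqrt (η 0 ⬝ᵥ P.mulVec (η 0)) - 2 * ε * l2 ^ 2 * M₀ / (l3 * Real.sqrt l1))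
              * Real.exp (-(l3 * t) / (2 * ε * l2))
          + 2 * ε * l2 ^ 2 * M₀ / (l3 * Real.sqrt l1) := by
  intro t ht
  have hsymm : P.IsSymm := isHermitian_iff_isSymm.1 hP.1
  have hl2 : 0 < l2 := by
    have := (hlow (Pi.single 0 1)).trans (hupp _)
    rw [norm2_single_one] at this
    linarith
  have hM₀ : 0 ≤ M₀ := (abs_nonneg _).trans (hh 0 le_rfl)
  have hη' : ∀ s, 0 ≤ s → HasDerivAt η (errorField ε π (h s) (η s)) s :=
    fun s hs => hasDerivAt_pi.2 (hη s hs)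
  have key := sqrt_le_of_hasDerivAt_le_neg_mul_add_sqrt (k := l3 / (2 * ε * l2))
    (c := M₀ * l2 / √l1) (V := fun s => η s ⬝ᵥ P *ᵥ η s) (by positivity) (by positivity)
    (fun s _ => by simpa using hP.posSemidef.dotProduct_mulVec_nonneg (η s))
    (fun s hs => (hη' s hs).dotProduct_mulVec_self hsymm)
    (fun s hs => two_mul_dotProduct_mulVec_errorField_le hsymm hε hl1 hl2 hl3.le (hlow _) (hupp _)
      (hquad _) (abs_dotProduct_mulVec_le_of_norm2_eq_one hP.posSemidef hupp
        (norm2_single_one _) _) (hh s hs)) ht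
  have hck : M₀ * l2 / √l1 / (l3 / (2 * ε * l2)) = 2 * ε * l2 ^ 2 * M₀ / (l3 * √l1) := by
    field_simp
  have hkt : -(l3 / (2 * ε * l2) * t) = -(l3 * t) / (2 * ε * l2) := by ring
  rwa [hck, hkt] at key
end

section
/- For real parameters 0 < γ ≤ 1 and δ > 0, define fal(s, γ, δ) = |s|^γ · sgn(s) if |s| > δ, and fal(s, γ, δ) = s / δ^{1−γ} if |s| ≤ δ. Then for every β ≥ δ^{γ−1}, the function s ↦ fal(s, γ, δ) is sector bounded in [0, β]; that is, fal(s, γ, δ) · (β s − fal(s, γ, δ)) ≥ 0 for all s ∈ ℝ. -/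
/-- the `fal` function used in extended state observers. -/
noncomputable def fal (s γ δ : ℝ) : ℝ :=
  if δ < |s| then |s| ^ γ * Real.sign s else s / δ ^ (1 - γ)

/-- The function `s ↦ fal(s, γ, δ)` is sector bounded in `[0, β]` for every `β ≥ δ^{γ-1}`. -/
theorem fal_sectorBounded (γ δ : ℝ) (hγ0 : 0 < γ) (hγ1 : γ ≤ 1) (hδ : 0 < δ)
    (β : ℝ) (hβ : δ ^ (γ - 1) ≤ β) :
    SectorBounded (fun s => fal s γ δ) 0 β := by
  intro s
  simp only [fal, zero_mul, sub_zero]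
  by_cases h : δ < |s|
  · simp only [h, if_true]
    have hs0 : s ≠ 0 := by
      intro h0; rw [h0, abs_zero] at h; linarith
    have hsgn : Real.sign s * s = |s| := by
      rcases lt_or_gt_of_ne hs0 with h1 | h1
      · rw [Real.sign_of_neg h1, abs_of_neg h1]; ring
      · rw [Real.sign_of_pos h1, abs_of_pos h1]; ring
    have hsgn2 : Real.sign s * Real.sign s = 1 := by
      rcases lt_or_gt_of_ne hs0 with h1 | h1
      · rw [Real.sign_of_neg h1]; norm_num
      · rw [Real.sign_of_pos h1]; norm_num
    have habs : (0:ℝ) < |s| := lt_trans hδ h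
    have key : |s| ^ γ * Real.sign s * (β * s - |s| ^ γ * Real.sign s)
        = |s| ^ γ * (β * |s| - |s| ^ γ) := by
      have : |s| ^ γ * Real.sign s * (β * s - |s| ^ γ * Real.sign s)
          = |s| ^ γ * (β * (Real.sign s * s) - |s| ^ γ * (Real.sign s * Real.sign s)) := by
        ring
      rw [this, hsgn, hsgn2, mul_one]
    rw [key]
    apply mul_nonneg (Real.rpow_nonneg habs.le γ)
    have h1 : |s| ^ γ = |s| ^ γ * 1 := by ring
    have h2 : |s| ^ γ * (δ ^ (γ - 1) * δ ^ (1 - γ)) ≤ |s| ^ γ * (β * |s| ^ (1 - γ)) := by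
      apply mul_le_mul_of_nonneg_left _ (Real.rpow_nonneg habs.le γ)
      apply mul_le_mul hβ (Real.rpow_le_rpow hδ.le h.le (by linarith))
        (Real.rpow_nonneg hδ.le _) (le_trans (Real.rpow_nonneg hδ.le _) hβ)
    rw [← Real.rpow_add hδ, show γ - 1 + (1 - γ) = 0 by ring, Real.rpow_zero, mul_one] at h2
    have h3 : |s| ^ γ * (β * |s| ^ (1 - γ)) = β * |s| := by
      rw [show |s| ^ γ * (β * |s| ^ (1 - γ)) = β * (|s| ^ γ * |s| ^ (1 - γ)) by ring,
        ← Real.rpow_add habs, show γ + (1 - γ) = 1 by ring, Real.rpow_one]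
    rw [h3] at h2
    linarith
  · simp only [h, if_false]
    have habs : |s| ≤ δ := le_of_not_gt h
    have hd : δ ^ (1 - γ) > 0 := Real.rpow_pos_of_pos hδ _
    have heq : s / δ ^ (1 - γ) = δ ^ (γ - 1) * s := by
      rw [div_eq_mul_inv, ← Real.rpow_neg hδ.le, show -(1 - γ) = γ - 1 by ring, mul_comm]
    rw [heq]
    have : δ ^ (γ - 1) * s * (β * s - δ ^ (γ - 1) * s)
        = (δ ^ (γ - 1) * (β - δ ^ (γ - 1))) * (s * s) := by ring
    rw [this]
    exact mul_nonneg (mul_nonneg (Real.rpow_nonneg hδ.le _) (by linarith)) (mul_self_nonneg s)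
end
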